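/- Refined upper bound on orthogonal rank: for any A ∈ ℝ^{I₁ × ⋯ × I_N}, rank_⊥(A) ≤ min over m = 1,…,N of ∏_{n ≠ m} rankₙ(A), where rankₙ(A) is the n-rank of A (the rank of the mode-n unfolding of A). -/

import Mathlib

open scoped BigOperators

/-- The outer product of vectors `v n ∈ ℝ^{I n}`. -/
noncomputable def outer {N : ℕ} {I : Fin N → ℕ}
    (v : (n : Fin N) → EuclideanSpace ℝ (Fin (I n))) :
    EuclideanSpace ℝ ((n : Fin N) → Fin (I n)) :=
  (WithLp.equiv 2 _).symm (fun i => ∏ n, v n (i n))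

/-- The orthogonal rank. -/
noncomputable def orank {N : ℕ} {I : Fin N → ℕ}
    (A : EuclideanSpace ℝ ((n : Fin N) → Fin (I n))) : ℕ :=
  sInf {R : ℕ | ∃ v : Fin R → (n : Fin N) → EuclideanSpace ℝ (Fin (I n)),
    A = ∑ r, outer (v r) ∧
    ∀ s t : Fin R, s ≠ t → (inner ℝ (outer (v s)) (outer (v t)) : ℝ) = 0}

/-- Complete a multi-index over all modes `≠ m` with a value `x` in mode `m`. -/
def extIdx {N : ℕ} {I : Fin N → ℕ} (m : Fin N)
    (j : (n : {n : Fin N // n ≠ m}) → Fin (I n.1)) (x : Fin (I m)) :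
    (n : Fin N) → Fin (I n) :=
  fun n => if h : n = m then (cast (by rw [h]) x : Fin (I n)) else j ⟨n, h⟩

/-- The `n`-rank of a tensor: the rank of its mode-`n` unfolding, i.e. the
dimension of the span of its mode-`n` fibers. -/
noncomputable def nrank {N : ℕ} {I : Fin N → ℕ}
    (A : EuclideanSpace ℝ ((n : Fin N) → Fin (I n))) (n : Fin N) : ℕ :=
  Module.finrank ℝ (Submodule.span ℝ (Set.range
    (fun j : (k : {k : Fin N // k ≠ n}) → Fin (I k.1) =>
      ((WithLp.equiv 2 _).symm (fun x => A (extIdx n j x)) :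
        EuclideanSpace ℝ (Fin (I n))))))

section Aux
variable {N : ℕ} {I : Fin N → ℕ} (A : EuclideanSpace ℝ ((n : Fin N) → Fin (I n)))

/-- Span of the mode-`n` fibers of `A`. -/
noncomputable def fiberSpan (n : Fin N) : Submodule ℝ (EuclideanSpace ℝ (Fin (I n))) :=
  Submodule.span ℝ (Set.range
    (fun j : (k : {k : Fin N // k ≠ n}) → Fin (I k.1) =>
      ((WithLp.equiv 2 _).symm (fun x => A (extIdx n j x)) : EuclideanSpace ℝ (Fin (I n)))))

/-- An orthonormal basis of the fiber span. -/
noncomputable def obasis (n : Fin N) : OrthonormalBasis (Fin (nrank A n)) ℝ (fiberSpan A n) :=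
  stdOrthonormalBasis ℝ (fiberSpan A n)

/-- Basis vectors viewed in the ambient space. -/
noncomputable def bb (n : Fin N) (k : Fin (nrank A n)) : EuclideanSpace ℝ (Fin (I n)) :=
  (obasis A n k : EuclideanSpace ℝ (Fin (I n)))

/-- The matrix of the orthogonal projection onto the fiber span. -/
noncomputable def Pmat (n : Fin N) (x y : Fin (I n)) : ℝ :=
  ∑ k, bb A n k x * bb A n k y

lemma fiber_mem (n : Fin N) (i : (k : Fin N) → Fin (I k)) :
    ((WithLp.equiv 2 _).symm (fun x => A (Function.update i n x)) : EuclideanSpace ℝ (Fin (I n)))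
      ∈ fiberSpan A n := by
  have h : (fun x => A (extIdx n (fun k => i k.1) x)) = (fun x => A (Function.update i n x)) := by
    funext x; refine congrArg (fun i => A i) ?_; funext k
    by_cases hk : k = n
    · subst hk
      simp only [extIdx, dif_pos, Function.update_self]
      exact eq_of_heq (cast_heq _ _)
    · simp [extIdx, hk]
  exact Submodule.subset_span ⟨fun k => i k.1, congrArg _ h⟩

lemma proj_fix (n : Fin N) (i : (k : Fin N) → Fin (I k)) :
    ∑ y, A (Function.update i n y) * Pmat A n y (i n) = A i := by
  set g : EuclideanSpace ℝ (Fin (I n)) :=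
    (WithLp.equiv 2 _).symm (fun x => A (Function.update i n x)) with hgdef
  have hg : g ∈ fiberSpan A n := fiber_mem A n i
  have h2 := congrArg (Subtype.val) ((obasis A n).sum_repr ⟨g, hg⟩)
  rw [Submodule.coe_sum] at h2
  simp only [SetLike.val_smul, OrthonormalBasis.repr_apply_apply, Submodule.coe_inner] at h2
  have h1 : g = ∑ k, (inner ℝ (bb A n k) g : ℝ) • bb A n k := by
    simpa [bb] using h2.symm
  have hgy : ∀ y, g y = A (Function.update i n y) := fun y => rfl
  have happ : ∀ x, g x = ∑ k, (inner ℝ (bb A n k) g : ℝ) * bb A n k x := by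
    intro x
    conv_lhs => rw [h1]
    rw [WithLp.ofLp_sum, Finset.sum_apply x Finset.univ _]
    rfl
  have hinner : ∀ k, (inner ℝ (bb A n k) g : ℝ) = ∑ y, bb A n k y * g y := by
    intro k
    simp [PiLp.inner_apply, RCLike.inner_apply, mul_comm]
  calc ∑ y, A (Function.update i n y) * Pmat A n y (i n)
      = ∑ y, ∑ k, g y * (bb A n k y * bb A n k (i n)) := by
        simp only [Pmat, Finset.mul_sum, hgy]
    _ = ∑ k, (∑ y, bb A n k y * g y) * bb A n k (i n) := by
        rw [Finset.sum_comm]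
        congr 1; funext k
        rw [Finset.sum_mul]
        congr 1; funext y; ring
    _ = g (i n) := by
        rw [happ (i n)]
        simp only [hinner]
    _ = A i := by rw [hgy, Function.update_eq_self]

/-- Mode-wise projection kernel: projection on modes in `S`, identity elsewhere. -/
noncomputable def Kmat (S : Finset (Fin N)) (n : Fin N) (x y : Fin (I n)) : ℝ :=
  if n ∈ S then Pmat A n x y else (if x = y then 1 else 0)

lemma key (S : Finset (Fin N)) (i : (n : Fin N) → Fin (I n)) :
    ∑ i' : (n : Fin N) → Fin (I n), A i' * ∏ n, Kmat A S n (i' n) (i n) = A i := by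
  induction S using Finset.induction_on generalizing i with
  | empty =>
    rw [Fintype.sum_eq_single i]
    · simp [Kmat]
    · intro i' hne
      obtain ⟨n, hn⟩ := Function.ne_iff.mp hne
      have h0 : ∏ n, Kmat A ∅ n (i' n) (i n) = 0 :=
        Finset.prod_eq_zero (Finset.mem_univ n) (by simp [Kmat, hn])
      rw [h0, mul_zero]
  | @insert n₀ S hn₀ ih =>
    have stepB : ∀ i' : (n : Fin N) → Fin (I n),
        ∑ y, A i' * (∏ n, Kmat A S n (i' n) (Function.update i n₀ y n)) * Pmat A n₀ y (i n₀)
        = A i' * (Pmat A n₀ (i' n₀) (i n₀) *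
            ∏ n ∈ Finset.univ.erase n₀, Kmat A S n (i' n) (i n)) := by
      intro i'
      have hprod : ∀ y, (∏ n, Kmat A S n (i' n) (Function.update i n₀ y n))
          = (if i' n₀ = y then 1 else 0) *
            ∏ n ∈ Finset.univ.erase n₀, Kmat A S n (i' n) (i n) := by
        intro y
        rw [← Finset.mul_prod_erase Finset.univ _ (Finset.mem_univ n₀)]
        congr 1
        · simp [Kmat, hn₀, Function.update_self]
        · refine Finset.prod_congr rfl fun n hn => ?_
          rw [Function.update_of_ne (Finset.mem_erase.mp hn).1]
      simp only [hprod]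
      rw [Finset.sum_eq_single (i' n₀)]
      · rw [if_pos rfl]; ring
      · intro y _ hy
        rw [if_neg (fun h => hy h.symm)]; ring
      · intro h; exact absurd (Finset.mem_univ _) h
    calc ∑ i' : (n : Fin N) → Fin (I n), A i' * ∏ n, Kmat A (insert n₀ S) n (i' n) (i n)
        = ∑ i' : (n : Fin N) → Fin (I n), A i' * (Pmat A n₀ (i' n₀) (i n₀) *
            ∏ n ∈ Finset.univ.erase n₀, Kmat A S n (i' n) (i n)) := by
          refine Finset.sum_congr rfl fun i' _ => ?_
          congr 1
          rw [← Finset.mul_prod_erase Finset.univ _ (Finset.mem_univ n₀)]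
          congr 1
          · simp [Kmat]
          · refine Finset.prod_congr rfl fun n hn => ?_
            have hne : n ≠ n₀ := (Finset.mem_erase.mp hn).1
            simp [Kmat, Finset.mem_insert, hne]
      _ = ∑ i' : (n : Fin N) → Fin (I n), ∑ y,
            A i' * (∏ n, Kmat A S n (i' n) (Function.update i n₀ y n)) * Pmat A n₀ y (i n₀) := by
          exact Finset.sum_congr rfl fun i' _ => (stepB i').symm
      _ = ∑ y, (∑ i' : (n : Fin N) → Fin (I n),
            A i' * ∏ n, Kmat A S n (i' n) (Function.update i n₀ y n)) * Pmat A n₀ y (i n₀) := by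
          rw [Finset.sum_comm]
          exact Finset.sum_congr rfl fun y _ => (Finset.sum_mul _ _ _).symm
      _ = ∑ y, A (Function.update i n₀ y) * Pmat A n₀ y (i n₀) := by
          exact Finset.sum_congr rfl fun y _ => by rw [ih]
      _ = A i := proj_fix A n₀ i

variable (m : Fin N)

/-- The mode-`m` component of the rank-one terms. -/
noncomputable def wAux (j : (n : {n : Fin N // n ≠ m}) → Fin (nrank A n.1)) :
    EuclideanSpace ℝ (Fin (I m)) :=
  (WithLp.equiv 2 _).symm fun x =>
    ∑ i' : (n : Fin N) → Fin (I n),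
      A i' * ((if i' m = x then 1 else 0) *
        ∏ n : {n : Fin N // n ≠ m}, bb A n.1 (j n) (i' n.1))

/-- The vectors of the rank-one terms. -/
noncomputable def vAux (j : (n : {n : Fin N // n ≠ m}) → Fin (nrank A n.1)) :
    (n : Fin N) → EuclideanSpace ℝ (Fin (I n)) :=
  fun n => if h : n = m then (cast (by rw [h]) (wAux A m j)) else bb A n (j ⟨n, h⟩)

lemma vAux_m (j : (n : {n : Fin N // n ≠ m}) → Fin (nrank A n.1)) :
    vAux A m j m = wAux A m j := by
  rw [vAux, dif_pos rfl]
  exact eq_of_heq (cast_heq _ _)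

lemma vAux_ne (j : (n : {n : Fin N // n ≠ m}) → Fin (nrank A n.1))
    (n : Fin N) (h : n ≠ m) : vAux A m j n = bb A n (j ⟨n, h⟩) := by
  rw [vAux, dif_neg h]

lemma inner_outer (u v : (n : Fin N) → EuclideanSpace ℝ (Fin (I n))) :
    (inner ℝ (outer u) (outer v) : ℝ) = ∏ n, (inner ℝ (u n) (v n) : ℝ) := by
  have h1 : (inner ℝ (outer u) (outer v) : ℝ)
      = ∑ i : (n : Fin N) → Fin (I n), (∏ n, u n (i n)) * (∏ n, v n (i n)) := by
    simp [PiLp.inner_apply, RCLike.inner_apply, outer, mul_comm]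
  have h2 : ∀ n, (inner ℝ (u n) (v n) : ℝ) = ∑ x, u n x * v n x := by
    intro n; simp [PiLp.inner_apply, RCLike.inner_apply, mul_comm]
  rw [h1]
  simp only [h2]
  rw [Finset.prod_univ_sum, Fintype.piFinset_univ]
  exact Finset.sum_congr rfl fun i _ => (Finset.prod_mul_distrib).symm

lemma reconstruct :
    A = ∑ j : (n : {n : Fin N // n ≠ m}) → Fin (nrank A n.1), outer (vAux A m j) := by
  apply WithLp.ofLp_injective
  refine funext fun i => ?_
  symm
  calc (∑ j : (n : {n : Fin N // n ≠ m}) → Fin (nrank A n.1), outer (vAux A m j)) i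
      = ∑ j : (n : {n : Fin N // n ≠ m}) → Fin (nrank A n.1),
          wAux A m j (i m) * ∏ n : {n : Fin N // n ≠ m}, bb A n.1 (j n) (i n.1) := by
        rw [WithLp.ofLp_sum, Finset.sum_apply i Finset.univ _]
        refine Finset.sum_congr rfl fun j _ => ?_
        show ∏ n, vAux A m j n (i n) = _
        rw [← Finset.mul_prod_erase Finset.univ _ (Finset.mem_univ m), vAux_m]
        congr 1
        rw [Finset.prod_subtype (p := fun n => n ≠ m) (Finset.univ.erase m)
          (fun n => by simp [Finset.mem_erase]) (fun n => vAux A m j n (i n))]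
        exact Finset.prod_congr rfl fun n _ => by rw [vAux_ne A m j n.1 n.2]
    _ = ∑ j : (n : {n : Fin N // n ≠ m}) → Fin (nrank A n.1),
          ∑ i' : (n : Fin N) → Fin (I n),
            (A i' * ((if i' m = i m then 1 else 0) *
              ∏ n : {n : Fin N // n ≠ m}, bb A n.1 (j n) (i' n.1))) *
            ∏ n : {n : Fin N // n ≠ m}, bb A n.1 (j n) (i n.1) := by
        refine Finset.sum_congr rfl fun j _ => ?_
        rw [← Finset.sum_mul]
        rfl
    _ = ∑ i' : (n : Fin N) → Fin (I n),
          ∑ j : (n : {n : Fin N // n ≠ m}) → Fin (nrank A n.1),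
            (A i' * ((if i' m = i m then 1 else 0) *
              ∏ n : {n : Fin N // n ≠ m}, bb A n.1 (j n) (i' n.1))) *
            ∏ n : {n : Fin N // n ≠ m}, bb A n.1 (j n) (i n.1) := Finset.sum_comm
    _ = ∑ i' : (n : Fin N) → Fin (I n),
          A i' * ((if i' m = i m then 1 else 0) *
            ∑ j : (n : {n : Fin N // n ≠ m}) → Fin (nrank A n.1),
              ∏ n : {n : Fin N // n ≠ m},
                (bb A n.1 (j n) (i' n.1) * bb A n.1 (j n) (i n.1))) := by
        refine Finset.sum_congr rfl fun i' _ => ?_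
        have hterm : ∀ j : (n : {n : Fin N // n ≠ m}) → Fin (nrank A n.1),
            (A i' * ((if i' m = i m then 1 else 0) *
              ∏ n : {n : Fin N // n ≠ m}, bb A n.1 (j n) (i' n.1))) *
            ∏ n : {n : Fin N // n ≠ m}, bb A n.1 (j n) (i n.1)
            = A i' * ((if i' m = i m then 1 else 0) *
              ∏ n : {n : Fin N // n ≠ m},
                (bb A n.1 (j n) (i' n.1) * bb A n.1 (j n) (i n.1))) := by
          intro j
          rw [Finset.prod_mul_distrib]
          ring
        rw [Finset.sum_congr rfl (fun j _ => hterm j), ← Finset.mul_sum, ← Finset.mul_sum]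
    _ = ∑ i' : (n : Fin N) → Fin (I n),
          A i' * ((if i' m = i m then 1 else 0) *
            ∏ n : {n : Fin N // n ≠ m}, Pmat A n.1 (i' n.1) (i n.1)) := by
        refine Finset.sum_congr rfl fun i' _ => ?_
        have hP : ∏ n : {n : Fin N // n ≠ m}, Pmat A n.1 (i' n.1) (i n.1)
            = ∑ j : (n : {n : Fin N // n ≠ m}) → Fin (nrank A n.1),
                ∏ n : {n : Fin N // n ≠ m},
                  (bb A n.1 (j n) (i' n.1) * bb A n.1 (j n) (i n.1)) := by
          simp only [Pmat]
          rw [Finset.prod_univ_sum, Fintype.piFinset_univ]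
        rw [hP]
    _ = ∑ i' : (n : Fin N) → Fin (I n),
          A i' * ∏ n, Kmat A (Finset.univ.erase m) n (i' n) (i n) := by
        refine Finset.sum_congr rfl fun i' _ => ?_
        congr 1
        rw [← Finset.mul_prod_erase Finset.univ _ (Finset.mem_univ m)]
        congr 1
        · simp [Kmat]
        · rw [Finset.prod_subtype (p := fun n => n ≠ m) (Finset.univ.erase m)
            (fun n => by simp [Finset.mem_erase])
            (fun n => Kmat A (Finset.univ.erase m) n (i' n) (i n))]
          refine Finset.prod_congr rfl fun n _ => ?_
          simp [Kmat, Finset.mem_erase, n.2]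
    _ = A i := key A _ i

end Aux

/-- Refined upper bound on orthogonal rank:
`rank_⊥(A) ≤ min_{m} ∏_{n ≠ m} rankₙ(A)`, i.e. for every mode `m`,
`rank_⊥(A) ≤ ∏_{n ≠ m} rankₙ(A)`. -/
theorem orank_le_prod_nrank {N : ℕ} {I : Fin N → ℕ}
    (A : EuclideanSpace ℝ ((n : Fin N) → Fin (I n))) :
    ∀ m : Fin N, orank A ≤ ∏ n ∈ Finset.univ.erase m, nrank A n := by
  intro m
  have hcard : Fintype.card ((n : {n : Fin N // n ≠ m}) → Fin (nrank A n.1))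
      = ∏ n ∈ Finset.univ.erase m, nrank A n := by
    rw [Fintype.card_pi]
    simp only [Fintype.card_fin]
    exact (Finset.prod_subtype _ (fun n => by simp [Finset.mem_erase]) _).symm
  let e : Fin (∏ n ∈ Finset.univ.erase m, nrank A n)
      ≃ ((n : {n : Fin N // n ≠ m}) → Fin (nrank A n.1)) :=
    (Fintype.equivFinOfCardEq hcard).symm
  apply Nat.sInf_le
  refine ⟨fun r => vAux A m (e r), ?_, ?_⟩
  · exact (reconstruct A m).trans (Equiv.sum_comp e (fun j => outer (vAux A m j))).symm
  · intro s t hst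
    show (inner ℝ (outer (vAux A m (e s))) (outer (vAux A m (e t))) : ℝ) = 0
    rw [inner_outer]
    obtain ⟨n₀, hn₀⟩ := Function.ne_iff.mp (e.injective.ne hst)
    refine Finset.prod_eq_zero (Finset.mem_univ n₀.1) ?_
    rw [vAux_ne A m _ n₀.1 n₀.2, vAux_ne A m _ n₀.1 n₀.2]
    have horth := ((obasis A n₀.1).orthonormal).2 hn₀
    rw [bb, bb, ← Submodule.coe_inner]
    exact horth
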